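/- Let K be a field of characteristic 2, 𝔥 a Lie algebra over K, and sq_𝔥 : 𝔥 → 𝔥 a 2-structure on 𝔥: ⁅sq_𝔥 h, h'⁆ = ⁅h,⁅h,h'⁆⁆, sq_𝔥 (λ • h) = λ² • sq_𝔥 h, and sq_𝔥 (h + h') = sq_𝔥 h + sq_𝔥 h' + ⁅h,h'⁆ for all h, h' ∈ 𝔥 and λ ∈ K. On 𝔥 × 𝔥* with the bracket ⁅(h,π),(h',π')⁆ := (⁅h,h'⁆, π ∘ ad h' + π' ∘ ad h), define Q (h,π) := (sq_𝔥 h, π ∘ ad h). Then Q is a 2-structure on 𝔥 × 𝔥*: ⁅Q f, g⁆ = ⁅f,⁅f,g⁆⁆, Q (λ • f) = λ² • Q f, and Q (f + g) = Q f + Q g + ⁅f,g⁆ for all f, g ∈ 𝔥 × 𝔥* and λ ∈ K. -/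

import Mathlib

/-- The bracket on the Manin triple `𝔥 ⊕ 𝔥*` (with `𝔥*` abelian), in characteristic 2. -/
def maninBracket {K : Type*} [Field K] {H : Type*} [LieRing H] [LieAlgebra K H]
    (f g : H × (H →ₗ[K] K)) : H × (H →ₗ[K] K) :=
  (⁅f.1, g.1⁆, f.2 ∘ₗ (LieAlgebra.ad K H g.1) + g.2 ∘ₗ (LieAlgebra.ad K H f.1))

/-- The induced squaring on the Manin triple `𝔥 ⊕ 𝔥*`. -/
def maninSq {K : Type*} [Field K] {H : Type*} [LieRing H] [LieAlgebra K H]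
    (sqH : H → H) (f : H × (H →ₗ[K] K)) : H × (H →ₗ[K] K) :=
  (sqH f.1, f.2 ∘ₗ (LieAlgebra.ad K H f.1))

/-! The `𝔥` components are the axioms of `sqH`. On the `𝔥*` components, `Q (λ • f)` and
`Q (f + g)` follow from bilinearity of `(π, h) ↦ π ∘ ad h`, and `⁅Q f, g⁆ = ⁅f, ⁅f, g⁆⁆` from
`ad (sqH h) = ad h ∘ ad h` together with the Leibniz rule
`ad h ∘ ad h' = ad ⁅h, h'⁆ + ad h' ∘ ad h`. -/

open LieAlgebra

section Ad

variable (R : Type*) {L : Type*} [CommRing R] [LieRing L] [LieAlgebra R L]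

theorem ad_comp_ad (x y : L) : ad R L x ∘ₗ ad R L y = ad R L ⁅x, y⁆ + ad R L y ∘ₗ ad R L x :=
  LinearMap.ext fun z => leibniz_lie x y z

theorem ad_eq_ad_comp_ad_of_lie_eq {s x : L} (h : ∀ y : L, ⁅s, y⁆ = ⁅x, ⁅x, y⁆⁆) :
    ad R L s = ad R L x ∘ₗ ad R L x :=
  LinearMap.ext h

end Ad

section Manin

variable {K : Type*} [Field K] {H : Type*} [LieRing H] [LieAlgebra K H] {sqH : H → H}

theorem maninBracket_maninSq (hsq_ad : ∀ h h' : H, ⁅sqH h, h'⁆ = ⁅h, ⁅h, h'⁆⁆)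
    (f g : H × (H →ₗ[K] K)) :
    maninBracket (maninSq sqH f) g = maninBracket f (maninBracket f g) := by
  refine Prod.ext (hsq_ad f.1 g.1) ?_
  simp only [maninBracket, maninSq, ad_eq_ad_comp_ad_of_lie_eq K (hsq_ad f.1),
    LinearMap.comp_assoc]
  rw [ad_comp_ad K f.1 g.1, LinearMap.comp_add, LinearMap.add_comp, LinearMap.comp_assoc]
  abel

theorem maninSq_smul (hsq_smul : ∀ (l : K) (h : H), sqH (l • h) = l ^ 2 • sqH h)
    (l : K) (f : H × (H →ₗ[K] K)) : maninSq sqH (l • f) = l ^ 2 • maninSq sqH f := by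
  refine Prod.ext (hsq_smul l f.1) ?_
  simp only [maninSq, Prod.smul_fst, Prod.smul_snd, map_smul, LinearMap.comp_smul,
    LinearMap.smul_comp, smul_smul, sq]

theorem maninSq_add (hsq_add : ∀ h h' : H, sqH (h + h') = sqH h + sqH h' + ⁅h, h'⁆)
    (f g : H × (H →ₗ[K] K)) :
    maninSq sqH (f + g) = maninSq sqH f + maninSq sqH g + maninBracket f g := by
  refine Prod.ext (hsq_add f.1 g.1) ?_
  simp only [maninSq, maninBracket, Prod.fst_add, Prod.snd_add, map_add,
    LinearMap.comp_add, LinearMap.add_comp]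
  abel

end Manin

theorem manin_triple_two_structure_general
    {K : Type*} [Field K]
    {H : Type*} [LieRing H] [LieAlgebra K H]
    (sqH : H → H)
    (hsq_ad : ∀ h h' : H, ⁅sqH h, h'⁆ = ⁅h, ⁅h, h'⁆⁆)
    (hsq_smul : ∀ (l : K) (h : H), sqH (l • h) = l ^ 2 • sqH h)
    (hsq_add : ∀ h h' : H, sqH (h + h') = sqH h + sqH h' + ⁅h, h'⁆) :
    (∀ f g : H × (H →ₗ[K] K),
      maninBracket (maninSq sqH f) g = maninBracket f (maninBracket f g)) ∧
    (∀ (l : K) (f : H × (H →ₗ[K] K)), maninSq sqH (l • f) = l ^ 2 • maninSq sqH f) ∧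
    (∀ f g : H × (H →ₗ[K] K),
      maninSq sqH (f + g) = maninSq sqH f + maninSq sqH g + maninBracket f g) :=
  ⟨maninBracket_maninSq hsq_ad, maninSq_smul hsq_smul, maninSq_add hsq_add⟩

theorem manin_triple_two_structure
    {K : Type*} [Field K] [CharP K 2]
    {H : Type*} [LieRing H] [LieAlgebra K H]
    (sqH : H → H)
    (hsq_ad : ∀ h h' : H, ⁅sqH h, h'⁆ = ⁅h, ⁅h, h'⁆⁆)
    (hsq_smul : ∀ (l : K) (h : H), sqH (l • h) = l ^ 2 • sqH h)
    (hsq_add : ∀ h h' : H, sqH (h + h') = sqH h + sqH h' + ⁅h, h'⁆) :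
    (∀ f g : H × (H →ₗ[K] K),
      maninBracket (maninSq sqH f) g = maninBracket f (maninBracket f g)) ∧
    (∀ (l : K) (f : H × (H →ₗ[K] K)), maninSq sqH (l • f) = l ^ 2 • maninSq sqH f) ∧
    (∀ f g : H × (H →ₗ[K] K),
      maninSq sqH (f + g) = maninSq sqH f + maninSq sqH g + maninBracket f g) :=
  manin_triple_two_structure_general sqH hsq_ad hsq_smul hsq_add
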